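/- Let r ≥ 3 and s_1 ≤ … ≤ s_r be positive integers, and suppose ex(n, K_{r−1}, K_{s_1,…,s_{r−1}}) = Ω(n^{(r−1) − 1/s_1}) as n → ∞. Then ex(n, K_r, K_{s_1,…,s_r}) = Ω(n^{r − 1/s_1}). -/

import Mathlib

open SimpleGraph Finset Filter

/-- `G` is `H`-free: there is no copy of `H` in `G` as a subgraph. -/
def Free {α β : Type*} (H : SimpleGraph α) (G : SimpleGraph β) : Prop :=
  ¬ ∃ f : α ↪ β, ∀ a b, H.Adj a b → G.Adj (f a) (f b)

/-- Number of (unordered) copies of `F` in `G`: subgraphs of `G` isomorphic to `F`. -/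
noncomputable def copyCount {α β : Type*} (F : SimpleGraph α) (G : SimpleGraph β) : ℕ :=
  Nat.card {H : G.Subgraph // Nonempty (H.coe ≃g F)}

/-- The generalized Turán number: maximum number of copies of `F` in an `n`-vertex
`H`-free graph. -/
noncomputable def exGen {α β : Type*} (n : ℕ) (F : SimpleGraph α) (H : SimpleGraph β) : ℕ :=
  sSup {N | ∃ G : SimpleGraph (Fin n), _root_.Free H G ∧ copyCount F G = N}

/-- The complete multipartite graph with `r` parts of sizes `s 0, …, s (r-1)`. -/
def multipartite (r : ℕ) (s : Fin r → ℕ) : SimpleGraph (Σ i : Fin r, Fin (s i)) :=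
  completeMultipartiteGraph fun i => Fin (s i)

/-!
Join an independent set of `⌊n/2⌋` vertices completely to an extremal
`K_{s_1,…,s_{r-1}}`-free graph `G` on `⌈n/2⌉` vertices. In a copy of `K_{s_1,…,s_r}` inside
the join, vertices of the independent set can only lie in a single part, so the other `r - 1`
parts land in `G`; since `s` is monotone they contain a copy of `K_{s_1,…,s_{r-1}}`, which is
impossible. Every `(r-1)`-clique of `G` extends by each new vertex, so
`ex(n, K_r, K_{s_1,…,s_r}) ≥ ⌊n/2⌋ · ex(⌈n/2⌉, K_{r-1}, K_{s_1,…,s_{r-1}})`, which raises the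
exponent of the lower bound by one.
-/

theorem free_iff_not_isContained {α β : Type*} {H : SimpleGraph α} {G : SimpleGraph β} :
    _root_.Free H G ↔ ¬ H ⊑ G := by
  rw [isContained_iff_exists_le_comap]
  rfl

section exGen

variable {α β : Type*} {n : ℕ} {F : SimpleGraph α} {H : SimpleGraph β}

theorem bddAbove_copyCount_free :
    BddAbove {N | ∃ G : SimpleGraph (Fin n), _root_.Free H G ∧ _root_.copyCount F G = N} :=
  ((Set.finite_range fun G : SimpleGraph (Fin n) => _root_.copyCount F G).subset
    (by rintro _ ⟨G, -, rfl⟩; exact ⟨G, rfl⟩)).bddAbove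

theorem copyCount_le_exGen {G : SimpleGraph (Fin n)} (hG : H.Free G) :
    _root_.copyCount F G ≤ exGen n F H :=
  le_csSup bddAbove_copyCount_free ⟨G, free_iff_not_isContained.2 hG, rfl⟩

theorem exists_free_exGen_eq_copyCount (h : exGen n F H ≠ 0) :
    ∃ G : SimpleGraph (Fin n), H.Free G ∧ exGen n F H = _root_.copyCount F G := by
  have hne :
      {N | ∃ G : SimpleGraph (Fin n), _root_.Free H G ∧ _root_.copyCount F G = N}.Nonempty :=
    Set.nonempty_iff_ne_empty.2 fun he => h (by rw [exGen, he, csSup_empty]; rfl)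
  obtain ⟨G, hG, hcount⟩ := Nat.sSup_mem hne bddAbove_copyCount_free
  exact ⟨G, free_iff_not_isContained.1 hG, hcount.symm⟩

end exGen

namespace SimpleGraph.Subgraph

variable {V α : Type*} {G : SimpleGraph V} {H : G.Subgraph}

theorem adj_iff_of_iso_top (φ : H.coe ≃g (⊤ : SimpleGraph α)) {a b : V} :
    H.Adj a b ↔ a ≠ b ∧ a ∈ H.verts ∧ b ∈ H.verts := by
  refine ⟨fun h => ⟨h.ne, h.fst_mem, h.snd_mem⟩, fun ⟨hne, ha, hb⟩ => ?_⟩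
  have : (⊤ : SimpleGraph α).Adj (φ ⟨a, ha⟩) (φ ⟨b, hb⟩) :=
    fun h => hne (congrArg Subtype.val (φ.injective h))
  exact φ.map_rel_iff.1 this

theorem eq_induce_verts_of_iso_top (φ : H.coe ≃g (⊤ : SimpleGraph α)) :
    H = (⊤ : G.Subgraph).induce H.verts := by
  ext a b
  · rfl
  · rw [adj_iff_of_iso_top φ, induce_adj, top_adj]
    exact ⟨fun h => ⟨h.2.1, h.2.2, H.adj_sub ((adj_iff_of_iso_top φ).2 h)⟩,
      fun ⟨ha, hb, hab⟩ => ⟨hab.ne, ha, hb⟩⟩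

end SimpleGraph.Subgraph

theorem SimpleGraph.IsNClique.nonempty_induce_iso_top {V : Type*} {G : SimpleGraph V} {r : ℕ}
    {S : Finset V} (hS : G.IsNClique r S) :
    Nonempty (((⊤ : G.Subgraph).induce S).coe ≃g (⊤ : SimpleGraph (Fin r))) := by
  rw [← induce_eq_coe_induce_top, induce_eq_top.2 hS.isClique]
  exact ⟨Iso.completeGraph (S.equivFinOfCardEq hS.card_eq)⟩

theorem copyCount_top_eq_card_cliqueFinset {V : Type*} [Fintype V] [DecidableEq V]
    (G : SimpleGraph V) [DecidableRel G.Adj] (r : ℕ) :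
    _root_.copyCount (⊤ : SimpleGraph (Fin r)) G = #(G.cliqueFinset r) := by
  rw [_root_.copyCount, ← Nat.card_eq_finsetCard]
  refine Nat.card_congr
    { toFun := fun H => ⟨(Set.toFinite H.1.verts).toFinset, ?_⟩
      invFun := fun S =>
        ⟨(⊤ : G.Subgraph).induce S, (mem_cliqueFinset_iff.1 S.2).nonempty_induce_iso_top⟩
      left_inv := fun H => ?_
      right_inv := fun S => by simp }
  · obtain ⟨φ⟩ := H.2
    refine mem_cliqueFinset_iff.2 ⟨fun a ha b hb hab => ?_, ?_⟩
    · rw [Finset.mem_coe, Set.Finite.mem_toFinset] at ha hb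
      exact H.1.adj_sub ((H.1.adj_iff_of_iso_top φ).2 ⟨hab, ha, hb⟩)
    · rw [← Set.ncard_eq_toFinset_card _, ← Nat.card_coe_set_eq, Nat.card_congr φ.toEquiv,
        Nat.card_eq_fintype_card, Fintype.card_fin]
  · obtain ⟨φ⟩ := H.2
    exact Subtype.ext (by simpa using (H.1.eq_induce_verts_of_iso_top φ).symm)

theorem card_cliqueFinset_le_exGen {β V : Type*} {H : SimpleGraph β} [Fintype V] [DecidableEq V]
    {G : SimpleGraph V} [DecidableRel G.Adj] {r : ℕ} (hG : H.Free G) :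
    #(G.cliqueFinset r) ≤ exGen (Fintype.card V) (⊤ : SimpleGraph (Fin r)) H := by
  classical
  let e := Fintype.equivFin V
  calc #(G.cliqueFinset r) = #((G.map e).cliqueFinset r) := by
        rw [cliqueFinset_map_of_equiv, card_map]
    _ = _root_.copyCount (⊤ : SimpleGraph (Fin r)) (G.map e) :=
        (copyCount_top_eq_card_cliqueFinset _ r).symm
    _ ≤ _ := copyCount_le_exGen ((free_congr_right (Iso.map e G)).1 hG)

namespace SimpleGraph

/-- The join of the edgeless graph on `μ` with `G`. -/
def botJoin (μ : Type*) {V : Type*} (G : SimpleGraph V) : SimpleGraph (μ ⊕ V) where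
  Adj
    | .inl _, .inl _ => False
    | .inl _, .inr _ => True
    | .inr _, .inl _ => True
    | .inr a, .inr b => G.Adj a b
  symm := ⟨by rintro (a | a) (b | b) h <;> first | exact h | trivial | exact h.symm⟩
  loopless := ⟨by rintro (a | a) h <;> first | exact h | exact G.loopless.irrefl a h⟩

variable {μ V : Type*} {G : SimpleGraph V}

@[simp] theorem botJoin_adj_inl_inl {a b : μ} : ¬ (botJoin μ G).Adj (.inl a) (.inl b) := id

@[simp] theorem botJoin_adj_inl_inr {a : μ} {b : V} : (botJoin μ G).Adj (.inl a) (.inr b) :=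
  trivial

@[simp] theorem botJoin_adj_inr_inl {a : V} {b : μ} : (botJoin μ G).Adj (.inr a) (.inl b) :=
  trivial

@[simp] theorem botJoin_adj_inr_inr {a b : V} :
    (botJoin μ G).Adj (.inr a) (.inr b) ↔ G.Adj a b :=
  .rfl

theorem card_mul_card_cliqueFinset_le_botJoin [Fintype μ] [DecidableEq μ] [Fintype V]
    [DecidableEq V] [DecidableRel G.Adj] [DecidableRel (botJoin μ G).Adj] (r : ℕ) :
    Fintype.card μ * #(G.cliqueFinset r) ≤ #((botJoin μ G).cliqueFinset (r + 1)) := by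
  rw [← card_univ, ← card_product]
  refine card_le_card_of_injOn (fun p => ({p.1} : Finset μ).disjSum p.2) (fun p hp => ?_)
    (fun p _ q _ hpq => ?_)
  · rw [mem_coe, mem_product, mem_cliqueFinset_iff] at hp
    rw [mem_coe, mem_cliqueFinset_iff]
    have hS := hp.2
    refine ⟨?_, by rw [card_disjSum, card_singleton, hS.card_eq, add_comm]⟩
    rintro (a | a) ha (b | b) hb hab
    · simp_all
    · simp
    · simp
    · rw [mem_coe, inr_mem_disjSum] at ha hb
      exact hS.isClique ha hb (by simpa using hab)
  · simpa [Prod.ext_iff] using hpq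

theorem Copy.exists_forall_fst_ne_isRight {ι : Type*} [Nonempty ι] {W : ι → Type*}
    (f : Copy (completeMultipartiteGraph W) (botJoin μ G)) :
    ∃ j, ∀ b : Σ i, W i, b.1 ≠ j → (f b).isRight := by
  by_cases h : ∃ a, (f a).isLeft
  · obtain ⟨a, ha⟩ := h
    refine ⟨a.1, fun b hb => Sum.not_isLeft.1 fun hb' => ?_⟩
    obtain ⟨x, hx⟩ := Sum.isLeft_iff.1 ha
    obtain ⟨y, hy⟩ := Sum.isLeft_iff.1 hb'
    have hadj := f.toHom.map_adj (show (completeMultipartiteGraph W).Adj b a from hb)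
    rw [Copy.toHom_apply, Copy.toHom_apply, hx, hy] at hadj
    exact botJoin_adj_inl_inl hadj
  · push Not at h
    exact ⟨Classical.arbitrary ι, fun b _ => Sum.not_isLeft.1 (h b)⟩

theorem Copy.isContained_of_forall_isRight {α : Type*} {A : SimpleGraph α}
    (f : Copy A (botJoin μ G)) (hf : ∀ a, (f a).isRight) : A ⊑ G := by
  have hinr (a : α) : .inr ((f a).getRight (hf a)) = f a := Sum.inr_getRight _ _
  refine ⟨⟨⟨fun a => (f a).getRight (hf a), fun {a b} hab => ?_⟩, fun a b hab => ?_⟩⟩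
  · rw [← botJoin_adj_inr_inr (μ := μ), hinr, hinr]
    exact f.toHom.map_adj hab
  · refine f.injective (?_ : f a = f b)
    rw [← hinr a, ← hinr b]
    exact congrArg _ hab

def completeMultipartiteGraph.copySigmaMap {ι ι' : Type*} {V : ι → Type*} {W : ι' → Type*}
    (φ : ι ↪ ι') (ψ : ∀ i, V i ↪ W (φ i)) :
    Copy (completeMultipartiteGraph V) (completeMultipartiteGraph W) :=
  ⟨⟨Function.Embedding.sigmaMap φ ψ, fun h => φ.injective.ne h⟩,
    (Function.Embedding.sigmaMap φ ψ).injective⟩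

theorem free_multipartite_botJoin {r : ℕ} {s : Fin (r + 1) → ℕ} (hs : Monotone s)
    (hG : (multipartite r (s ∘ Fin.castSucc)).Free G) :
    (multipartite (r + 1) s).Free (botJoin μ G) := by
  rintro ⟨f⟩
  obtain ⟨j, hj⟩ := Copy.exists_forall_fst_ne_isRight f
  have hle (i : Fin r) : s i.castSucc ≤ s (j.succAbove i) := hs <| by
    rw [Fin.succAbove]; split_ifs <;> simp [Fin.le_def]
  let ι := completeMultipartiteGraph.copySigmaMap (V := fun i => Fin (s i.castSucc))
    (W := fun i => Fin (s i)) ⟨j.succAbove, Fin.succAbove_right_injective⟩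
    fun i => Fin.castLEEmb (hle i)
  exact hG ((f.comp ι).isContained_of_forall_isRight fun b => hj _ (j.succAbove_ne b.1))

end SimpleGraph

theorem div_two_mul_exGen_top_le_exGen_top_succ {r : ℕ} {s : Fin (r + 1) → ℕ}
    (hs : Monotone s) (n : ℕ) :
    n / 2 * exGen (n - n / 2) (⊤ : SimpleGraph (Fin r)) (multipartite r (s ∘ Fin.castSucc)) ≤
      exGen n (⊤ : SimpleGraph (Fin (r + 1))) (multipartite (r + 1) s) := by
  classical
  rcases eq_or_ne (exGen (n - n / 2) (⊤ : SimpleGraph (Fin r))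
    (multipartite r (s ∘ Fin.castSucc))) 0 with h0 | h0
  · simp [h0]
  obtain ⟨G, hG, hcount⟩ := exists_free_exGen_eq_copyCount h0
  have hcard : Fintype.card (Fin (n / 2) ⊕ Fin (n - n / 2)) = n := by simp; omega
  calc n / 2 * exGen (n - n / 2) (⊤ : SimpleGraph (Fin r)) (multipartite r (s ∘ Fin.castSucc))
      = Fintype.card (Fin (n / 2)) * #(G.cliqueFinset r) := by
        rw [hcount, copyCount_top_eq_card_cliqueFinset, Fintype.card_fin]
    _ ≤ #((botJoin (Fin (n / 2)) G).cliqueFinset (r + 1)) :=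
        card_mul_card_cliqueFinset_le_botJoin r
    _ ≤ _ := (card_cliqueFinset_le_exGen (free_multipartite_botJoin hs hG)).trans_eq
        (by rw [hcard])

theorem exists_pos_eventually_mul_rpow_add_one_le {f g : ℕ → ℝ} {α : ℝ} (hα : 0 ≤ α)
    (hf : ∃ c : ℝ, 0 < c ∧ ∀ᶠ n : ℕ in atTop, c * (n : ℝ) ^ α ≤ f n)
    (hfg : ∀ n, ((n / 2 : ℕ) : ℝ) * f (n - n / 2) ≤ g n) :
    ∃ c : ℝ, 0 < c ∧ ∀ᶠ n : ℕ in atTop, c * (n : ℝ) ^ (α + 1) ≤ g n := by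
  obtain ⟨c, hc, hf⟩ := hf
  have hsub : Tendsto (fun n : ℕ => n - n / 2) atTop atTop :=
    tendsto_atTop_atTop.2 fun b => ⟨2 * b, fun n hn => by omega⟩
  refine ⟨c / (4 * 2 ^ α), by positivity, ?_⟩
  filter_upwards [hsub.eventually hf, eventually_ge_atTop 2] with n hn hn2
  have hn0 : (0 : ℝ) < n := Nat.cast_pos.2 (by omega)
  have hquarter : (n : ℝ) / 4 ≤ ((n / 2 : ℕ) : ℝ) := by
    rw [div_le_iff₀ (by norm_num)]
    exact_mod_cast (by omega : n ≤ n / 2 * 4)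
  have hhalf : (n : ℝ) / 2 ≤ ((n - n / 2 : ℕ) : ℝ) := by
    rw [div_le_iff₀ (by norm_num)]
    exact_mod_cast (by omega : n ≤ (n - n / 2) * 2)
  calc c / (4 * 2 ^ α) * (n : ℝ) ^ (α + 1) = (n : ℝ) / 4 * (c * ((n : ℝ) / 2) ^ α) := by
        rw [Real.rpow_add_one hn0.ne', Real.div_rpow (by positivity) (by norm_num)]
        field_simp
    _ ≤ ((n / 2 : ℕ) : ℝ) * (c * ((n - n / 2 : ℕ) : ℝ) ^ α) := by gcongr
    _ ≤ ((n / 2 : ℕ) : ℝ) * f (n - n / 2) := by gcongr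
    _ ≤ g n := hfg n

/-- If `ex(n, K_{r-1}, K_{s_1,…,s_{r-1}}) = Ω(n^{(r-1) - 1/s_1})`, then
`ex(n, K_r, K_{s_1,…,s_r}) = Ω(n^{r - 1/s_1})`. -/
theorem exGen_omega_of_omega (r : ℕ) (hr : 3 ≤ r) (s : Fin r → ℕ)
    (hmono : Monotone s)
    (hlow : ∃ c : ℝ, 0 < c ∧ ∀ᶠ n : ℕ in atTop,
      c * (n : ℝ) ^ ((r : ℝ) - 1 - 1 / (s ⟨0, by omega⟩ : ℝ)) ≤
        (exGen n (⊤ : SimpleGraph (Fin (r - 1)))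
          (multipartite (r - 1) fun i => s (i.castLE (Nat.sub_le r 1))) : ℝ)) :
    ∃ c : ℝ, 0 < c ∧ ∀ᶠ n : ℕ in atTop,
      c * (n : ℝ) ^ ((r : ℝ) - 1 / (s ⟨0, by omega⟩ : ℝ)) ≤
        (exGen n (⊤ : SimpleGraph (Fin r)) (multipartite r s) : ℝ) := by
  obtain ⟨r, rfl⟩ : ∃ r', r = r' + 1 := ⟨r - 1, by omega⟩
  set t : ℕ := s ⟨0, by omega⟩
  have hα : 0 ≤ ((r + 1 : ℕ) : ℝ) - 1 - 1 / (t : ℝ) := by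
    have : (3 : ℝ) ≤ ((r + 1 : ℕ) : ℝ) := by exact_mod_cast hr
    linarith [one_div (t : ℝ) ▸ Nat.cast_inv_le_one t]
  have hexp : ((r + 1 : ℕ) : ℝ) - 1 / (t : ℝ) = ((r + 1 : ℕ) : ℝ) - 1 - 1 / (t : ℝ) + 1 := by
    ring
  rw [hexp]
  exact exists_pos_eventually_mul_rpow_add_one_le hα hlow
    fun n => by exact_mod_cast div_two_mul_exGen_top_le_exGen_top_succ hmono n
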